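/- arXiv:1408.0259 — 6 statements merged into one kernel-verified Lean document; each statement's English description precedes it below -/
import Mathlib

section
/- Let H ≥ 1, L ≥ 1, and let σ_1,…,σ_L and τ_1,…,τ_L be permutations of {0,…,H−1}, with associated expanded codewords c_σ(l,j,k) = T_{σ_l}(j,k) and c_τ(l,j,k) = T_{τ_l}(j,k). Then there exists an involutive row-preserving permutation Π of the position set {1,…,L}×{0,…,H−1}×{0,…,H−1} such that c_σ ∘ Π = c_τ, c_τ ∘ Π = c_σ, and for every received word R one has d_H(R ∘ Π, c_τ) = d_H(R, c_σ) and d_H(R ∘ Π, c_σ) = d_H(R, c_τ). -/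
/-!
Row `j` of block `l` of `c_σ` has its only one in column `σ_l⁻¹ j`, and that of `c_τ` in
column `τ_l⁻¹ j`. Transposing these two columns in every row is an involutive row-preserving
permutation `Φ` with `c_σ ∘ Φ = c_τ`, hence also `c_τ ∘ Φ = c_σ`; and reindexing both words
by the same bijection of positions does not change their Hamming distance.
-/

/-- The permutation code matrix of a permutation `σ` of `{0,…,H−1}`:
entry `(j,k)` is `true` iff `σ k = j`. -/
def pcm {H : ℕ} (σ : Equiv.Perm (Fin H)) (j k : Fin H) : Bool :=
  decide (σ k = j)

/-- The expanded codeword associated with a sequence `σ_1, …, σ_L` of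
permutations of `{0,…,H−1}`: position `(l, j, k)` carries entry `(j,k)` of the
permutation code matrix of `σ_l`. -/
def expandedCodeword {H L : ℕ} (σ : Fin L → Equiv.Perm (Fin H)) :
    Fin L × Fin H × Fin H → Bool :=
  fun p => pcm (σ p.1) p.2.1 p.2.2

theorem hammingDist_comp_equiv {ι κ β : Type*} [Fintype ι] [Fintype κ] [DecidableEq β]
    (e : ι ≃ κ) (x y : κ → β) : hammingDist (x ∘ e) (y ∘ e) = hammingDist x y :=
  Finset.card_equiv e (by simp)

theorem Equiv.Perm.apply_swap_inv_eq_iff {α : Type*} [DecidableEq α] (s t : Equiv.Perm α)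
    (j k : α) : s (swap (s⁻¹ j) (t⁻¹ j) k) = j ↔ t k = j := by
  rw [← Perm.eq_inv_iff_eq, ← Perm.eq_inv_iff_eq (f := t), swap_apply_eq_iff, swap_apply_left]

theorem Function.Involutive.comp_eq_of_comp_eq {α β : Type*} {f : α → α} (hf : Involutive f)
    {x y : α → β} (h : x ∘ f = y) : y ∘ f = x := by
  rw [← h, Function.comp_assoc, hf.comp_self, Function.comp_id]

def onesSwap {H L : ℕ} (σ τ : Fin L → Equiv.Perm (Fin H)) :
    Equiv.Perm (Fin L × Fin H × Fin H) :=
  Equiv.prodCongrRight fun l => Equiv.prodCongrRight fun j =>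
    Equiv.swap ((σ l)⁻¹ j) ((τ l)⁻¹ j)

section
variable {H L : ℕ} (σ τ : Fin L → Equiv.Perm (Fin H))

theorem onesSwap_apply (p : Fin L × Fin H × Fin H) :
    onesSwap σ τ p = (p.1, p.2.1, Equiv.swap ((σ p.1)⁻¹ p.2.1) ((τ p.1)⁻¹ p.2.1) p.2.2) :=
  rfl

theorem onesSwap_involutive : Function.Involutive (onesSwap σ τ) := fun _ => by
  simp only [onesSwap_apply, Equiv.swap_apply_self]

theorem expandedCodeword_comp_onesSwap :
    expandedCodeword σ ∘ onesSwap σ τ = expandedCodeword τ := by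
  funext p
  simp only [Function.comp_apply, onesSwap_apply, expandedCodeword, pcm,
    Equiv.Perm.apply_swap_inv_eq_iff]

end

theorem stmt_1_general (H L : ℕ)
    (σ τ : Fin L → Equiv.Perm (Fin H)) :
    ∃ Φ : Equiv.Perm (Fin L × Fin H × Fin H),
      (∃ π : Fin L → Fin H → Equiv.Perm (Fin H),
        ∀ p : Fin L × Fin H × Fin H, Φ p = (p.1, p.2.1, π p.1 p.2.1 p.2.2)) ∧
      Function.Involutive Φ ∧
      (expandedCodeword σ ∘ Φ = expandedCodeword τ) ∧
      (expandedCodeword τ ∘ Φ = expandedCodeword σ) ∧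
      (∀ R : Fin L × Fin H × Fin H → Bool,
        hammingDist (R ∘ Φ) (expandedCodeword τ) = hammingDist R (expandedCodeword σ) ∧
        hammingDist (R ∘ Φ) (expandedCodeword σ) = hammingDist R (expandedCodeword τ)) := by
  have hστ := expandedCodeword_comp_onesSwap σ τ
  have hτσ := (onesSwap_involutive σ τ).comp_eq_of_comp_eq hστ
  refine ⟨onesSwap σ τ, ⟨fun l j => Equiv.swap ((σ l)⁻¹ j) ((τ l)⁻¹ j), onesSwap_apply σ τ⟩,
    onesSwap_involutive σ τ, hστ, hτσ, fun R => ⟨?_, ?_⟩⟩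
  · rw [← hστ, hammingDist_comp_equiv]
  · rw [← hτσ, hammingDist_comp_equiv]

/-- For any two expanded codewords `c_σ`, `c_τ` there is an involutive
row-preserving permutation `Π` of the position set with `c_σ ∘ Φ = c_τ`,
`c_τ ∘ Φ = c_σ`, and which preserves Hamming distances to the two codewords:
`d_H(R ∘ Φ, c_τ) = d_H(R, c_σ)` and `d_H(R ∘ Φ, c_σ) = d_H(R, c_τ)` for all
received words `R`. -/
theorem stmt_1 (H L : ℕ) (hH : 1 ≤ H) (hL : 1 ≤ L)
    (σ τ : Fin L → Equiv.Perm (Fin H)) :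
    ∃ Φ : Equiv.Perm (Fin L × Fin H × Fin H),
      (∃ π : Fin L → Fin H → Equiv.Perm (Fin H),
        ∀ p : Fin L × Fin H × Fin H, Φ p = (p.1, p.2.1, π p.1 p.2.1 p.2.2)) ∧
      Function.Involutive Φ ∧
      (expandedCodeword σ ∘ Φ = expandedCodeword τ) ∧
      (expandedCodeword τ ∘ Φ = expandedCodeword σ) ∧
      (∀ R : Fin L × Fin H × Fin H → Bool,
        hammingDist (R ∘ Φ) (expandedCodeword τ) = hammingDist R (expandedCodeword σ) ∧
        hammingDist (R ∘ Φ) (expandedCodeword σ) = hammingDist R (expandedCodeword τ)) :=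
  stmt_1_general H L σ τ
end

section
/- Under the row-mixture memoryless channel, the distribution of the Hamming distance between the received word and the transmitted expanded codeword does not depend on which expanded codeword was transmitted: for any two expanded codewords c_1, c_2 (arising from sequences of permutation matrices) and every integer d ≥ 0, ∑_{R : d_H(R, c_1) = d} P(R | c_1) = ∑_{R : d_H(R, c_2) = d} P(R | c_2), where the sums range over all received words R. -/
open scoped BigOperators

/-- The likelihood `P(R | T)` of the row-mixture memoryless channel. -/
def rowMixLik (L H : ℕ) (α : Fin H → ℝ) (f1 f0 : Fin H → Bool → Bool → ℝ)
    (R T : Fin L × Fin H × Fin H → Bool) : ℝ :=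
  ∏ l : Fin L, ∏ j : Fin H,
    (α j * ∏ k : Fin H, f1 j (R (l, j, k)) (T (l, j, k))
      + (1 - α j) * ∏ k : Fin H, f0 j (R (l, j, k)) (T (l, j, k)))

/-- Under the row-mixture memoryless channel, the distribution of the Hamming
distance between the received word and the transmitted expanded codeword does
not depend on which expanded codeword was transmitted. -/
theorem stmt_3 (H L : ℕ) (hH : 1 ≤ H) (hL : 1 ≤ L)
    (α : Fin H → ℝ) (hα : ∀ j, α j ∈ Set.Icc (0 : ℝ) 1)
    (f1 f0 : Fin H → Bool → Bool → ℝ)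
    (hf1 : ∀ j a b, f1 j a b ∈ Set.Icc (0 : ℝ) 1)
    (hf0 : ∀ j a b, f0 j a b ∈ Set.Icc (0 : ℝ) 1)
    (σ τ : Fin L → Equiv.Perm (Fin H)) (d : ℕ) :
    ∑ R ∈ Finset.univ.filter
        (fun R : Fin L × Fin H × Fin H → Bool =>
          hammingDist R (expandedCodeword σ) = d),
      rowMixLik L H α f1 f0 R (expandedCodeword σ)
    = ∑ R ∈ Finset.univ.filter
        (fun R : Fin L × Fin H × Fin H → Bool =>
          hammingDist R (expandedCodeword τ) = d),
      rowMixLik L H α f1 f0 R (expandedCodeword τ) := by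
  classical
  set cσ := expandedCodeword σ with hcσ
  set cτ := expandedCodeword τ with hcτ
  set ρ : Fin L → Equiv.Perm (Fin H) := fun l => (σ l)⁻¹ * τ l with hρ
  set e : (Fin L × Fin H × Fin H) ≃ (Fin L × Fin H × Fin H) :=
    { toFun := fun p => (p.1, p.2.1, ρ p.1 p.2.2)
      invFun := fun p => (p.1, p.2.1, (ρ p.1)⁻¹ p.2.2)
      left_inv := fun p => by simp
      right_inv := fun p => by simp } with he
  have hcw : ∀ p, cτ p = cσ (e p) := by
    intro p
    simp [hcσ, hcτ, expandedCodeword, pcm, he, hρ, Equiv.Perm.mul_apply]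
  have hham : ∀ R : Fin L × Fin H × Fin H → Bool,
      hammingDist (fun p => R (e p)) cτ = hammingDist R cσ := by
    intro R
    unfold hammingDist
    apply Finset.card_bij (fun p _ => e p)
    · intro p hp
      simp only [Finset.mem_filter, Finset.mem_univ, true_and] at hp ⊢
      rw [hcw p] at hp
      exact hp
    · intro a _ b _ h
      exact e.injective h
    · intro p hp
      refine ⟨e.symm p, ?_, by simp⟩
      simp only [Finset.mem_filter, Finset.mem_univ, true_and] at hp ⊢
      rw [hcw (e.symm p)]
      simpa using hp
  have hlik : ∀ R : Fin L × Fin H × Fin H → Bool,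
      rowMixLik L H α f1 f0 (fun p => R (e p)) cτ = rowMixLik L H α f1 f0 R cσ := by
    intro R
    unfold rowMixLik
    refine Finset.prod_congr rfl fun l _ => Finset.prod_congr rfl fun j _ => ?_
    have h1 : ∀ f : Fin H → Bool → Bool → ℝ,
        (∏ k : Fin H, f j (R (e (l, j, k))) (cτ (l, j, k)))
          = ∏ k : Fin H, f j (R (l, j, k)) (cσ (l, j, k)) := by
      intro f
      rw [← Equiv.prod_comp (ρ l) (fun k => f j (R (l, j, k)) (cσ (l, j, k)))]
      refine Finset.prod_congr rfl fun k _ => ?_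
      rw [hcw (l, j, k)]
      rfl
    rw [h1 f1, h1 f0]
  refine Finset.sum_nbij' (fun R => fun p => R (e p)) (fun R => fun p => R (e.symm p))
    ?_ ?_ ?_ ?_ ?_
  · intro R hR
    simp only [Finset.mem_filter, Finset.mem_univ, true_and] at hR ⊢
    rw [← hR]
    exact hham R
  · intro R hR
    simp only [Finset.mem_filter, Finset.mem_univ, true_and] at hR ⊢
    rw [← hR, ← hham (fun p => R (e.symm p))]
    congr 1
    funext p
    simp
  · intro R _
    funext p
    simp
  · intro R _
    funext p
    simp
  · intro R hR
    exact (hlik R).symm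
end

section
/- Under the row-mixture memoryless channel, the pairwise error probability between two expanded codewords is symmetric: for any two expanded codewords c_1, c_2 (arising from sequences of permutation matrices), ∑_{R : d_H(R, c_2) ≤ d_H(R, c_1)} P(R | c_1) = ∑_{R : d_H(R, c_1) ≤ d_H(R, c_2)} P(R | c_2), where the sums range over all received words R. In other words, the probability that a minimum-Hamming-distance decoder finds c_2 at least as close as the transmitted codeword c_1 equals the probability that it finds c_1 at least as close as the transmitted codeword c_2. -/
open scoped BigOperators

/-- Under the row-mixture memoryless channel, the pairwise error probability
between two expanded codewords is symmetric: the probability that a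
minimum-Hamming-distance decoder finds `c_τ` at least as close as the
transmitted codeword `c_σ` equals the probability that it finds `c_σ` at least
as close as the transmitted codeword `c_τ`. -/
theorem stmt_4 (H L : ℕ) (hH : 1 ≤ H) (hL : 1 ≤ L)
    (α : Fin H → ℝ) (hα : ∀ j, α j ∈ Set.Icc (0 : ℝ) 1)
    (f1 f0 : Fin H → Bool → Bool → ℝ)
    (hf1 : ∀ j a b, f1 j a b ∈ Set.Icc (0 : ℝ) 1)
    (hf0 : ∀ j a b, f0 j a b ∈ Set.Icc (0 : ℝ) 1)
    (σ τ : Fin L → Equiv.Perm (Fin H)) :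
    ∑ R ∈ Finset.univ.filter
        (fun R : Fin L × Fin H × Fin H → Bool =>
          hammingDist R (expandedCodeword τ) ≤ hammingDist R (expandedCodeword σ)),
      rowMixLik L H α f1 f0 R (expandedCodeword σ)
    = ∑ R ∈ Finset.univ.filter
        (fun R : Fin L × Fin H × Fin H → Bool =>
          hammingDist R (expandedCodeword σ) ≤ hammingDist R (expandedCodeword τ)),
      rowMixLik L H α f1 f0 R (expandedCodeword τ) := by
  classical
  -- the column swap in block `l`, row `j`
  set g : Fin L → Fin H → Equiv.Perm (Fin H) :=
    fun l j => Equiv.swap ((σ l)⁻¹ j) ((τ l)⁻¹ j) with hg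
  set Φ : (Fin L × Fin H × Fin H → Bool) → (Fin L × Fin H × Fin H → Bool) :=
    fun R p => R (p.1, p.2.1, g p.1 p.2.1 p.2.2) with hΦ
  have hginv : ∀ l j k, g l j (g l j k) = k := by
    intro l j k; simp [hg, Equiv.swap_apply_self]
  have hΦinv : ∀ R, Φ (Φ R) = R := by
    intro R; funext p; simp [hΦ, hginv]
  have hswap : ∀ R T, Φ R = T ↔ R = Φ T := by
    intro R T
    constructor
    · rintro rfl; rw [hΦinv]
    · rintro rfl; rw [hΦinv]
  have key : ∀ l j k, ((σ l) ((g l j) k) = j) ↔ ((τ l) k = j) := by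
    intro l j k
    constructor
    · intro h
      have h1 : g l j k = (σ l)⁻¹ j := by
        apply_fun (σ l)⁻¹ at h; simpa using h
      have h2 : k = (τ l)⁻¹ j := by
        have h3 := congrArg (g l j) h1
        rw [hginv] at h3
        rw [h3, hg]; simp [Equiv.swap_apply_left]
      rw [h2]; simp
    · intro h
      have h2 : k = (τ l)⁻¹ j := by
        apply_fun (τ l)⁻¹ at h; simpa using h
      rw [h2, hg]
      simp [Equiv.swap_apply_right]
  have hcσ : Φ (expandedCodeword σ) = expandedCodeword τ := by
    funext p
    obtain ⟨l, j, k⟩ := p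
    simp only [hΦ, expandedCodeword, pcm]
    exact decide_eq_decide.mpr (key l j k)
  have hcτ : Φ (expandedCodeword τ) = expandedCodeword σ := by
    rw [hswap] at hcσ; exact hcσ.symm
  -- hamming distance compatibility
  have hdist : ∀ R T : Fin L × Fin H × Fin H → Bool,
      hammingDist (Φ R) T = hammingDist R (Φ T) := by
    intro R T
    simp only [hammingDist]
    apply Finset.card_nbij' (fun p => (p.1, p.2.1, g p.1 p.2.1 p.2.2))
      (fun p => (p.1, p.2.1, g p.1 p.2.1 p.2.2))
    · rintro ⟨l, j, k⟩ hp
      simp only [Finset.mem_filter, Finset.mem_univ, true_and, hΦ] at hp ⊢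
      simpa [hginv] using hp
    · rintro ⟨l, j, k⟩ hp
      simp only [Finset.mem_filter, Finset.mem_univ, true_and, hΦ] at hp ⊢
      simpa [hginv] using hp
    · rintro ⟨l, j, k⟩ _; simp [hginv]
    · rintro ⟨l, j, k⟩ _; simp [hginv]
  -- likelihood compatibility
  have hlik : ∀ R T : Fin L × Fin H × Fin H → Bool,
      rowMixLik L H α f1 f0 (Φ R) T = rowMixLik L H α f1 f0 R (Φ T) := by
    intro R T
    unfold rowMixLik
    refine Finset.prod_congr rfl fun l _ => Finset.prod_congr rfl fun j _ => ?_
    have h1 : ∏ k : Fin H, f1 j (Φ R (l, j, k)) (T (l, j, k))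
        = ∏ k : Fin H, f1 j (R (l, j, k)) (Φ T (l, j, k)) := by
      rw [← Equiv.prod_comp (g l j) (fun k => f1 j (R (l, j, k)) (Φ T (l, j, k)))]
      refine Finset.prod_congr rfl fun k _ => ?_
      simp [hΦ, hginv]
    have h0 : ∏ k : Fin H, f0 j (Φ R (l, j, k)) (T (l, j, k))
        = ∏ k : Fin H, f0 j (R (l, j, k)) (Φ T (l, j, k)) := by
      rw [← Equiv.prod_comp (g l j) (fun k => f0 j (R (l, j, k)) (Φ T (l, j, k)))]
      refine Finset.prod_congr rfl fun k _ => ?_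
      simp [hΦ, hginv]
    rw [h1, h0]
  refine Finset.sum_nbij' Φ Φ ?_ ?_ ?_ ?_ ?_
  · intro R hR
    simp only [Finset.mem_filter, Finset.mem_univ, true_and] at hR ⊢
    calc hammingDist (Φ R) (expandedCodeword σ)
        = hammingDist R (expandedCodeword τ) := by rw [hdist, hcσ]
      _ ≤ hammingDist R (expandedCodeword σ) := hR
      _ = hammingDist (Φ R) (expandedCodeword τ) := by rw [hdist, hcτ]
  · intro R hR
    simp only [Finset.mem_filter, Finset.mem_univ, true_and] at hR ⊢
    calc hammingDist (Φ R) (expandedCodeword τ)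
        = hammingDist R (expandedCodeword σ) := by rw [hdist, hcτ]
      _ ≤ hammingDist R (expandedCodeword τ) := hR
      _ = hammingDist (Φ R) (expandedCodeword σ) := by rw [hdist, hcσ]
  · intro R _; exact hΦinv R
  · intro R _; exact hΦinv R
  · intro R _
    rw [hlik R (expandedCodeword τ), hcτ]
end

section
/- Let σ > 0, ν ≥ 0, θ ∈ ℝ, and let X and Y be independent real Gaussian random variables with means ν·cos θ and ν·sin θ respectively and common variance σ². Then for every t ≥ 0, P(X² + Y² ≥ t²) = ∫_t^∞ (x/σ²)·exp(−(x² + ν²)/(2σ²))·I₀(ν x/σ²) dx, where I₀(z) := (1/(2π))·∫_0^{2π} exp(z·cos φ) dφ. In particular, the left-hand side does not depend on the phase θ. -/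
open MeasureTheory ProbabilityTheory

/-- The zeroth-order modified Bessel function of the first kind, via its
integral representation `I₀(z) = (1/(2π)) ∫_0^{2π} exp(z cos φ) dφ`. -/
noncomputable def besselI0 (z : ℝ) : ℝ :=
  (1 / (2 * Real.pi)) * ∫ φ in (0 : ℝ)..(2 * Real.pi), Real.exp (z * Real.cos φ)


/-!
In polar coordinates `(r, φ)` the joint density of `(X, Y)` is
`(2πσ²)⁻¹ exp(-(r² + ν²)/(2σ²)) exp((νr/σ²) cos(φ - θ))`. Integrating over a full period in `φ`
removes the phase `θ` and produces `2π I₀(νr/σ²)`, so by Tonelli the tail probability is the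
lower integral of the Rice density over `[t, ∞)`. That integral is bounded by a probability,
hence finite, which turns it into the Bochner integral of the statement.
-/

open Real Set
open scoped ENNReal NNReal

@[fun_prop]
theorem continuous_besselI0 : Continuous besselI0 := by
  unfold besselI0
  fun_prop

theorem besselI0_pos (z : ℝ) : 0 < besselI0 z := by
  unfold besselI0
  have : 0 < ∫ φ in (0 : ℝ)..(2 * π), exp (z * cos φ) :=
    intervalIntegral.intervalIntegral_pos_of_pos
      ((by fun_prop : Continuous _).intervalIntegrable _ _) (fun _ => exp_pos _)
      (by positivity)
  positivity

theorem integral_Ioo_exp_mul_cos_sub (a θ : ℝ) :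
    ∫ φ in Ioo (-π) π, exp (a * cos (φ - θ)) = 2 * π * besselI0 a := by
  have hper : Function.Periodic (fun x => exp (a * cos x)) (2 * π) := fun x => by
    simp [cos_add_two_pi]
  rw [setIntegral_congr_set Ioo_ae_eq_Ioc, ← intervalIntegral.integral_of_le (by linarith [pi_pos]),
    intervalIntegral.integral_comp_sub_right (fun x => exp (a * cos x)),
    show π - θ = -π - θ + 2 * π by ring, hper.intervalIntegral_add_eq (-π - θ) 0, zero_add,
    besselI0]
  field_simp

/-- The Rice density; `v` is the variance `σ²` of each Gaussian component. -/
noncomputable def riceDensity (ν : ℝ) (v : ℝ≥0) (x : ℝ) : ℝ :=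
  x / v * exp (-(x ^ 2 + ν ^ 2) / (2 * v)) * besselI0 (ν * x / v)

theorem continuous_riceDensity (ν : ℝ) (v : ℝ≥0) : Continuous (riceDensity ν v) := by
  unfold riceDensity
  fun_prop

theorem riceDensity_nonneg (ν : ℝ) (v : ℝ≥0) {x : ℝ} (hx : 0 ≤ x) : 0 ≤ riceDensity ν v x := by
  have := besselI0_pos (ν * x / v)
  unfold riceDensity
  positivity

theorem gaussianReal_prod_gaussianReal {m₁ m₂ : ℝ} {v₁ v₂ : ℝ≥0} (hv₁ : v₁ ≠ 0) (hv₂ : v₂ ≠ 0) :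
    (gaussianReal m₁ v₁).prod (gaussianReal m₂ v₂)
      = volume.withDensity fun p : ℝ × ℝ =>
          ENNReal.ofReal (gaussianPDFReal m₁ v₁ p.1 * gaussianPDFReal m₂ v₂ p.2) := by
  rw [gaussianReal_of_var_ne_zero _ hv₁, gaussianReal_of_var_ne_zero _ hv₂,
    prod_withDensity (measurable_gaussianPDF _ _) (measurable_gaussianPDF _ _),
    Measure.volume_eq_prod]
  congr 1 with p
  exact (ENNReal.ofReal_mul (gaussianPDFReal_nonneg _ _ _)).symm

theorem gaussianPDFReal_mul_gaussianPDFReal_polar (ν θ r φ : ℝ) (v : ℝ≥0) :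
    gaussianPDFReal (ν * cos θ) v (r * cos φ) * gaussianPDFReal (ν * sin θ) v (r * sin φ)
      = (2 * π * v)⁻¹ * exp (-(r ^ 2 + ν ^ 2) / (2 * v)) * exp (ν * r / v * cos (φ - θ)) := by
  have hexp : -(r * cos φ - ν * cos θ) ^ 2 / (2 * v) + -(r * sin φ - ν * sin θ) ^ 2 / (2 * v)
      = -(r ^ 2 + ν ^ 2) / (2 * v) + ν * r / v * cos (φ - θ) := by
    rw [← add_div, cos_sub]
    linear_combination (-(r ^ 2) * cos_sq_add_sin_sq φ - ν ^ 2 * cos_sq_add_sin_sq θ) / (2 * v)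
  simp only [gaussianPDFReal]
  rw [mul_mul_mul_comm, ← mul_inv, mul_self_sqrt (by positivity), ← exp_add, hexp, exp_add]
  ring

theorem integral_Ioo_gaussianPDFReal_polar_eq_riceDensity (ν θ r : ℝ) (v : ℝ≥0) :
    ∫ φ in Ioo (-π) π,
        r * (gaussianPDFReal (ν * cos θ) v (r * cos φ) * gaussianPDFReal (ν * sin θ) v (r * sin φ))
      = riceDensity ν v r := by
  simp_rw [gaussianPDFReal_mul_gaussianPDFReal_polar, ← mul_assoc]
  rw [integral_const_mul, integral_Ioo_exp_mul_cos_sub, riceDensity]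
  field_simp

theorem setLIntegral_sq_le_sq_add_sq_eq_polar {f : ℝ × ℝ → ℝ≥0∞} (hf : Measurable f) {t : ℝ}
    (ht : 0 ≤ t) :
    ∫⁻ p in {p : ℝ × ℝ | t ^ 2 ≤ p.1 ^ 2 + p.2 ^ 2}, f p
      = ∫⁻ r in Ici t, ∫⁻ φ in Ioo (-π) π, ENNReal.ofReal r * f (r * cos φ, r * sin φ) := by
  set A := {p : ℝ × ℝ | t ^ 2 ≤ p.1 ^ 2 + p.2 ^ 2}
  have hA : MeasurableSet A := measurableSet_le (by fun_prop) (by fun_prop)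
  have hpolar (r φ : ℝ) (hr : 0 < r) : (r * cos φ, r * sin φ) ∈ A ↔ t ≤ r := by
    have : (r * cos φ) ^ 2 + (r * sin φ) ^ 2 = r ^ 2 := by
      linear_combination r ^ 2 * cos_sq_add_sin_sq φ
    change t ^ 2 ≤ _ ↔ _
    rw [this]
    exact pow_le_pow_iff_left₀ ht hr.le two_ne_zero
  have hmeas : Measurable fun p : ℝ × ℝ => ENNReal.ofReal p.1 • A.indicator f (polarCoord.symm p) :=
    by fun_prop
  rw [← lintegral_indicator hA, ← lintegral_comp_polarCoord_symm,
    show polarCoord.target = Ioi 0 ×ˢ Ioo (-π) π from rfl, Measure.volume_eq_prod,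
    setLIntegral_prod _ hmeas.aemeasurable]
  have hsymm (r φ : ℝ) : polarCoord.symm (r, φ) = (r * cos φ, r * sin φ) := rfl
  calc _ = ∫⁻ r in Ioi 0, (Ici t).indicator
          (fun r => ∫⁻ φ in Ioo (-π) π, ENNReal.ofReal r * f (r * cos φ, r * sin φ)) r := by
        refine setLIntegral_congr_fun measurableSet_Ioi fun r hr => ?_
        by_cases h : t ≤ r <;> simp [hsymm, hpolar r _ hr, h]
    _ = ∫⁻ r in Ici t ∩ Ioi 0, ∫⁻ φ in Ioo (-π) π, ENNReal.ofReal r * f (r * cos φ, r * sin φ) := by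
        rw [lintegral_indicator measurableSet_Ici, Measure.restrict_restrict measurableSet_Ici]
    _ = _ := by
        refine setLIntegral_congr ((Filter.EventuallyEq.rfl.inter Ioi_ae_eq_Ici).trans ?_)
        rw [inter_eq_left.2 (Ici_subset_Ici.2 ht)]
        rfl

theorem lintegral_Ioo_gaussianPDFReal_polar_eq_riceDensity (ν θ : ℝ) (v : ℝ≥0) {r : ℝ} (hr : 0 ≤ r) :
    ∫⁻ φ in Ioo (-π) π, ENNReal.ofReal r * ENNReal.ofReal
        (gaussianPDFReal (ν * cos θ) v (r * cos φ) * gaussianPDFReal (ν * sin θ) v (r * sin φ))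
      = ENNReal.ofReal (riceDensity ν v r) := by
  have hcont : Continuous fun φ => r * (gaussianPDFReal (ν * cos θ) v (r * cos φ)
      * gaussianPDFReal (ν * sin θ) v (r * sin φ)) := by
    simp only [gaussianPDFReal_def]
    fun_prop
  simp_rw [← ENNReal.ofReal_mul hr]
  rw [← integral_Ioo_gaussianPDFReal_polar_eq_riceDensity, ofReal_integral_eq_lintegral_ofReal
    (hcont.integrableOn_Icc.mono_set Ioo_subset_Icc_self)]
  exact Filter.Eventually.of_forall fun φ =>
    mul_nonneg hr (mul_nonneg (gaussianPDFReal_nonneg _ _ _) (gaussianPDFReal_nonneg _ _ _))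

theorem stmt_6_general {Ω : Type*} [MeasurableSpace Ω] (μ : Measure Ω)
    (σ : ℝ) (hσ : 0 < σ) (ν : ℝ) (θ : ℝ)
    (X Y : Ω → ℝ) (hXm : Measurable X) (hYm : Measurable Y)
    (hX : μ.map X = gaussianReal (ν * Real.cos θ) (σ ^ 2).toNNReal)
    (hY : μ.map Y = gaussianReal (ν * Real.sin θ) (σ ^ 2).toNNReal)
    (hXY : IndepFun X Y μ) :
    ∀ t : ℝ, 0 ≤ t →
      μ {ω | t ^ 2 ≤ X ω ^ 2 + Y ω ^ 2}
        = ENNReal.ofReal (∫ x in Set.Ici t,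
            (x / σ ^ 2) * Real.exp (-(x ^ 2 + ν ^ 2) / (2 * σ ^ 2))
              * besselI0 (ν * x / σ ^ 2)) := by
  intro t ht
  set v := (σ ^ 2).toNNReal
  have hv : v ≠ 0 := by simpa [v] using hσ.ne'
  have hvσ : (v : ℝ) = σ ^ 2 := Real.coe_toNNReal _ (sq_nonneg σ)
  set A := {p : ℝ × ℝ | t ^ 2 ≤ p.1 ^ 2 + p.2 ^ 2}
  have hA : MeasurableSet A := measurableSet_le (by fun_prop) (by fun_prop)
  have hlaw : μ.map (fun ω => (X ω, Y ω))
      = (gaussianReal (ν * cos θ) v).prod (gaussianReal (ν * sin θ) v) := by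
    rw [← hX, ← hY]
    exact (indepFun_iff_map_prod_eq_prod_map_map' hXm.aemeasurable hYm.aemeasurable
      (by rw [hX]; infer_instance) (by rw [hY]; infer_instance)).mp hXY
  have hrice : (gaussianReal (ν * cos θ) v).prod (gaussianReal (ν * sin θ) v) A
      = ∫⁻ r in Ici t, ENNReal.ofReal (riceDensity ν v r) := by
    rw [gaussianReal_prod_gaussianReal hv hv, withDensity_apply _ hA,
      setLIntegral_sq_le_sq_add_sq_eq_polar (by fun_prop) ht]
    exact setLIntegral_congr_fun measurableSet_Ici fun r hr =>
      lintegral_Ioo_gaussianPDFReal_polar_eq_riceDensity ν θ v (ht.trans hr)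
  calc μ {ω | t ^ 2 ≤ X ω ^ 2 + Y ω ^ 2}
      = ∫⁻ r in Ici t, ENNReal.ofReal (riceDensity ν v r) := by
        rw [← hrice, ← hlaw, Measure.map_apply (hXm.prodMk hYm) hA]
        rfl
    _ = ENNReal.ofReal (∫ r in Ici t, riceDensity ν v r) := by
        rw [integral_eq_lintegral_of_nonneg_ae, ENNReal.ofReal_toReal (hrice ▸ measure_ne_top _ A)]
        · exact (ae_restrict_iff' measurableSet_Ici).2
            (Filter.Eventually.of_forall fun r hr => riceDensity_nonneg ν v (ht.trans hr))
        · exact (continuous_riceDensity ν v).aestronglyMeasurable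
    _ = _ := by simp only [riceDensity, hvσ]

/-- If `X ~ N(ν cos θ, σ²)` and `Y ~ N(ν sin θ, σ²)` are independent, then for
every `t ≥ 0` the envelope tail probability `P(X² + Y² ≥ t²)` equals the Rice
tail integral `∫_t^∞ (x/σ²)·exp(−(x²+ν²)/(2σ²))·I₀(νx/σ²) dx` (the Marcum
Q-function `Q₁(ν/σ, t/σ)`); in particular it does not depend on the phase `θ`. -/
theorem stmt_6 {Ω : Type*} [MeasurableSpace Ω] (μ : Measure Ω)
    [IsProbabilityMeasure μ] (σ : ℝ) (hσ : 0 < σ) (ν : ℝ) (hν : 0 ≤ ν) (θ : ℝ)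
    (X Y : Ω → ℝ) (hXm : Measurable X) (hYm : Measurable Y)
    (hX : μ.map X = gaussianReal (ν * Real.cos θ) (σ ^ 2).toNNReal)
    (hY : μ.map Y = gaussianReal (ν * Real.sin θ) (σ ^ 2).toNNReal)
    (hXY : IndepFun X Y μ) :
    ∀ t : ℝ, 0 ≤ t →
      μ {ω | t ^ 2 ≤ X ω ^ 2 + Y ω ^ 2}
        = ENNReal.ofReal (∫ x in Set.Ici t,
            (x / σ ^ 2) * Real.exp (-(x ^ 2 + ν ^ 2) / (2 * σ ^ 2))
              * besselI0 (ν * x / σ ^ 2)) :=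
  stmt_6_general μ σ hσ ν θ X Y hXm hYm hX hY hXY
end

section
/- For the rate-1/2 (7,5) convolutional encoder with the Table II mapping P into 3×3 permutation code matrices, every error event has expanded weight at least 16, and the input sequence 1,0,0 (of length 3, with output symbols (1,1), (1,0), (1,1), mapped to the matrices of the words 123, 132, 123) is the unique error event of expanded weight exactly 16. Hence the free distance of the expanded code is d*_free = 16, and the number of minimum-weight error events is a_{16} = 1. -/
/-!
The symbol weights `d_H(P(v), P(0,0))` are `0, 4, 4, 6` for `v = (0,0), (0,1), (1,0), (1,1)`.
The least weight `distToZero s` of a path from state `s` back to `(0,0)` satisfies the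
Bellman inequality `distToZero s ≤ w(s → s') + distToZero s'` along every edge, so it bounds the
weight of every return path from below. An error event starts with the edge `(0,0) → (1,0)` of
weight `6`, and `distToZero (1,0) = 10`. Equality forces every edge to be tight, and the tight
edges leave no choice: from `(1,0)` the input must be `0, 0`.
-/

/-- Next state of the rate-1/2 (7,5) convolutional encoder: on input `u` from
state `(s₁, s₂)` the encoder moves to state `(u, s₁)`. -/
def nextState (u : ZMod 2) (s : ZMod 2 × ZMod 2) : ZMod 2 × ZMod 2 :=
  (u, s.1)

/-- Output symbol of the rate-1/2 (7,5) convolutional encoder: on input `u`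
from state `(s₁, s₂)` the encoder outputs `(u + s₁ + s₂, u + s₂)`. -/
def outSym (u : ZMod 2) (s : ZMod 2 × ZMod 2) : ZMod 2 × ZMod 2 :=
  (u + s.1 + s.2, u + s.2)

/-- The sequence of states visited (after each input bit) when feeding the
input list `us` to the encoder started in state `s`. -/
def encStates : ZMod 2 × ZMod 2 → List (ZMod 2) → List (ZMod 2 × ZMod 2)
  | _, [] => []
  | s, u :: us => nextState u s :: encStates (nextState u s) us

/-- The sequence of output symbols produced when feeding the input list `us`
to the encoder started in state `s`. -/
def encOutputs : ZMod 2 × ZMod 2 → List (ZMod 2) → List (ZMod 2 × ZMod 2)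
  | _, [] => []
  | s, u :: us => outSym u s :: encOutputs (nextState u s) us

/-- The Table II mapping `P` from output symbols to 3×3 permutation words:
`(0,0) ↦ 231`, `(0,1) ↦ 213`, `(1,0) ↦ 132`, `(1,1) ↦ 123` (0-indexed, the
word is the function `k ↦ w_k`). -/
def tableP (s : ZMod 2 × ZMod 2) : Fin 3 → Fin 3 :=
  if s = (0, 0) then ![1, 2, 0]
  else if s = (0, 1) then ![1, 0, 2]
  else if s = (1, 0) then ![0, 2, 1]
  else ![0, 1, 2]

/-- The 3×3 permutation code matrix of an output symbol: entry `(j,k)` is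
`true` iff `w_k = j` for the Table II word `w` of the symbol. -/
def Pmat (s : ZMod 2 × ZMod 2) : Fin 3 × Fin 3 → Bool :=
  fun jk => decide (tableP s jk.2 = jk.1)

/-- An error event: a nonempty input sequence beginning with `1` whose state
sequence (from the all-zero state) leaves the all-zero state and returns to it
exactly at the final step. -/
def IsErrorEvent (us : List (ZMod 2)) : Prop :=
  us ≠ [] ∧ us.head? = some 1 ∧
  (∀ s ∈ (encStates (0, 0) us).dropLast, s ≠ ((0 : ZMod 2), (0 : ZMod 2))) ∧
  (encStates (0, 0) us).getLast? = some (0, 0)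

/-- The expanded weight of an input sequence: the sum over its output symbols
`v` of `d_H(P(v), P(0,0))`. -/
def expWeight (us : List (ZMod 2)) : ℕ :=
  ((encOutputs (0, 0) us).map fun v => hammingDist (Pmat v) (Pmat (0, 0))).sum

abbrev EncState := ZMod 2 × ZMod 2

def symWeight (v : EncState) : ℕ := hammingDist (Pmat v) (Pmat (0, 0))

def pathWeight (s : EncState) (us : List (ZMod 2)) : ℕ :=
  ((encOutputs s us).map symWeight).sum

lemma pathWeight_cons (s : EncState) (u : ZMod 2) (us : List (ZMod 2)) :
    pathWeight s (u :: us) = symWeight (outSym u s) + pathWeight (nextState u s) us := by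
  simp [pathWeight, encOutputs]

/-- The input `us` drives the encoder from `s` to the zero state, which it reaches only at the
last step. -/
def ReturnsToZero : EncState → List (ZMod 2) → Prop
  | _, [] => False
  | s, [u] => nextState u s = 0
  | s, u :: u' :: us => nextState u s ≠ 0 ∧ ReturnsToZero (nextState u s) (u' :: us)

lemma returnsToZero_iff (s : EncState) (us : List (ZMod 2)) :
    ReturnsToZero s us ↔
      (∀ x ∈ (encStates s us).dropLast, x ≠ 0) ∧ (encStates s us).getLast? = some 0 := by
  induction us generalizing s with
  | nil => simp [ReturnsToZero, encStates]
  | cons u us ih =>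
    rcases us with _ | ⟨u', us⟩
    · simp [ReturnsToZero, encStates]
    · rw [ReturnsToZero, ih]
      simp only [encStates, List.dropLast_cons_cons, List.getLast?_cons_cons,
        List.forall_mem_cons, and_assoc]

def distToZero (s : EncState) : ℕ :=
  if s = (0, 0) then 0 else if s = (0, 1) then 6 else 10

def shortestReturn (s : EncState) : List (ZMod 2) :=
  if s.1 = 1 then [0, 0] else [0]

lemma distToZero_le_step (u : ZMod 2) (s : EncState) :
    distToZero s ≤ symWeight (outSym u s) + distToZero (nextState u s) := by
  revert u s; decide

lemma shortestReturn_of_nextState_eq_zero (u : ZMod 2) (s : EncState) (h : nextState u s = 0)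
    (heq : symWeight (outSym u s) = distToZero s) : [u] = shortestReturn s := by
  revert u s; decide

lemma shortestReturn_of_nextState_ne_zero (u : ZMod 2) (s : EncState) (h : nextState u s ≠ 0)
    (heq : symWeight (outSym u s) + distToZero (nextState u s) = distToZero s) :
    u :: shortestReturn (nextState u s) = shortestReturn s := by
  revert u s; decide

theorem ReturnsToZero.distToZero_le {s : EncState} {us : List (ZMod 2)}
    (h : ReturnsToZero s us) : distToZero s ≤ pathWeight s us := by
  induction us generalizing s with
  | nil => exact h.elim
  | cons u us ih =>
    rw [pathWeight_cons]
    refine (distToZero_le_step u s).trans (Nat.add_le_add_left ?_ _)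
    rcases us with _ | ⟨u', us⟩
    · rw [show nextState u s = 0 from h]; rfl
    · exact ih h.2

theorem ReturnsToZero.eq_shortestReturn {s : EncState} {us : List (ZMod 2)}
    (h : ReturnsToZero s us) (heq : pathWeight s us = distToZero s) : us = shortestReturn s := by
  induction us generalizing s with
  | nil => exact h.elim
  | cons u us ih =>
    rw [pathWeight_cons] at heq
    rcases us with _ | ⟨u', us⟩
    · exact shortestReturn_of_nextState_eq_zero u s h heq
    · have hle := distToZero_le_step u s
      have hle' := h.2.distToZero_le
      rw [ih h.2 (by omega)]
      exact shortestReturn_of_nextState_ne_zero u s h.1 (by omega)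

lemma IsErrorEvent.exists_eq_cons_returnsToZero {us : List (ZMod 2)} (h : IsErrorEvent us) :
    ∃ us', us = 1 :: us' ∧ ReturnsToZero (1, 0) us' := by
  obtain ⟨hne, hhead, hreturn⟩ := h
  rcases us with _ | ⟨u, us'⟩
  · exact absurd rfl hne
  obtain rfl : u = 1 := by simpa using hhead
  have h := (returnsToZero_iff (0, 0) (1 :: us')).2 hreturn
  rcases us' with _ | ⟨u', us'⟩
  · exact (by decide : nextState 1 ((0 : ZMod 2), (0 : ZMod 2)) ≠ 0) h |>.elim
  · exact ⟨_, rfl, h.2⟩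

/-- Every error event of the expanded (7,5) permutation trellis code has
expanded weight at least `16`; the input sequence `1,0,0` (with output symbols
`(1,1), (1,0), (1,1)`) is an error event of expanded weight exactly `16` and
is the unique error event of weight `16`. Hence `d*_free = 16` and `a₁₆ = 1`. -/
theorem stmt_8 :
    (∀ us : List (ZMod 2), IsErrorEvent us → 16 ≤ expWeight us) ∧
    (∀ us : List (ZMod 2), IsErrorEvent us → expWeight us = 16 → us = [1, 0, 0]) ∧
    IsErrorEvent [1, 0, 0] ∧ expWeight [1, 0, 0] = 16 ∧
    encOutputs (0, 0) [1, 0, 0] = [(1, 1), (1, 0), (1, 1)] := by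
  have hweight (us : List (ZMod 2)) : expWeight (1 :: us) = 6 + pathWeight (1, 0) us := rfl
  have hdist : distToZero (1, 0) = 10 := rfl
  refine ⟨fun us h => ?_, fun us h h16 => ?_, ⟨by decide, rfl, by decide, rfl⟩, rfl, rfl⟩
  · obtain ⟨us', rfl, h'⟩ := h.exists_eq_cons_returnsToZero
    have := h'.distToZero_le
    have := hweight us'
    omega
  · obtain ⟨us', rfl, h'⟩ := h.exists_eq_cons_returnsToZero
    have := hweight us'
    rw [h'.eq_shortestReturn (by omega)]
    rfl
end

section
/- For the rate-1/2 (7,5) convolutional encoder with the Table II mapping P into 3×3 permutation code matrices, every error event has expanded weight of the form 16 + 4k for some integer k ≥ 0, and for every integer k ≥ 0 the number of error events of expanded weight 16 + 4k is exactly 2^k. Equivalently, the weight enumerator (transfer function) of error events of the expanded code is T(D) = D^16 + 2·D^20 + 4·D^24 + 8·D^28 + ⋯ = ∑_{k≥0} 2^k D^{16+4k}. -/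
/- ==== auxiliary development ==== -/

def wOut (v : ZMod 2 × ZMod 2) : ℕ := hammingDist (Pmat v) (Pmat (0,0))

def wFrom (s : ZMod 2 × ZMod 2) (us : List (ZMod 2)) : ℕ :=
  ((encOutputs s us).map wOut).sum

lemma expWeight_eq (us : List (ZMod 2)) : expWeight us = wFrom (0,0) us := rfl

lemma wFrom_cons (s : ZMod 2 × ZMod 2) (u : ZMod 2) (us : List (ZMod 2)) :
    wFrom s (u :: us) = wOut (outSym u s) + wFrom (nextState u s) us := by
  simp [wFrom, encOutputs]

lemma encStates_cons (s : ZMod 2 × ZMod 2) (u : ZMod 2) (us : List (ZMod 2)) :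
    encStates s (u :: us) = nextState u s :: encStates (nextState u s) us := rfl

lemma encStates_length (s : ZMod 2 × ZMod 2) (us : List (ZMod 2)) :
    (encStates s us).length = us.length := by
  induction us generalizing s with
  | nil => rfl
  | cons u us ih => simp [encStates_cons, ih]

lemma encStates_ne_nil {s : ZMod 2 × ZMod 2} {us : List (ZMod 2)} (h : us ≠ []) :
    encStates s us ≠ [] := by
  intro hc
  apply h
  have := encStates_length s us
  rw [hc] at this
  exact List.length_eq_zero_iff.mp this.symm

def Bfun : ℕ → List ℕ → List (ZMod 2)
  | 0, [] => [0, 0]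
  | 0, j :: l => 0 :: 1 :: Bfun j l
  | j+1, l => 1 :: Bfun j l

def Ev (p : ℕ × List ℕ) : List (ZMod 2) := 1 :: Bfun p.1 p.2

def wgt (p : ℕ × List ℕ) : ℕ := p.1 + p.2.sum + p.2.length

lemma getLast?_cons_ne_nil {α : Type*} (a : α) {l : List α} (h : l ≠ []) :
    (a :: l).getLast? = l.getLast? := by
  obtain ⟨b, t, rfl⟩ := List.exists_cons_of_ne_nil h
  exact List.getLast?_cons_cons

lemma Bfun_ne_nil (j : ℕ) (l : List ℕ) : Bfun j l ≠ [] := by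
  induction j, l using Bfun.induct <;> simp [Bfun]

/-- Weight of a Bfun tail from states (1,0) or (1,1). -/
lemma Bfun_weight : ∀ j l, wFrom (1,0) (Bfun j l) = 4*(j + l.sum + l.length) + 10
    ∧ wFrom (1,1) (Bfun j l) = 4*(j + l.sum + l.length) + 10 := by
  intro j l
  induction j, l using Bfun.induct with
  | case1 =>
    simp only [Bfun]
    constructor <;> decide
  | case2 j l ih =>
    have h1 : nextState 0 ((1:ZMod 2),(0:ZMod 2)) = (0,1) := rfl
    have h2 : nextState 0 ((1:ZMod 2),(1:ZMod 2)) = (0,1) := rfl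
    have h3 : nextState 1 ((0:ZMod 2),(1:ZMod 2)) = (1,0) := rfl
    have o1 : wOut (outSym 0 ((1:ZMod 2),(0:ZMod 2))) = 4 := by decide
    have o2 : wOut (outSym 0 ((1:ZMod 2),(1:ZMod 2))) = 4 := by decide
    have o3 : wOut (outSym 1 ((0:ZMod 2),(1:ZMod 2))) = 0 := by decide
    simp only [Bfun, wFrom_cons, h1, h2, h3, o1, o2, o3, ih.1]
    constructor <;> (simp; omega)
  | case3 j l ih =>
    have h1 : nextState 1 ((1:ZMod 2),(0:ZMod 2)) = (1,1) := rfl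
    have h2 : nextState 1 ((1:ZMod 2),(1:ZMod 2)) = (1,1) := rfl
    have o1 : wOut (outSym 1 ((1:ZMod 2),(0:ZMod 2))) = 4 := by decide
    have o2 : wOut (outSym 1 ((1:ZMod 2),(1:ZMod 2))) = 4 := by decide
    simp only [Bfun, wFrom_cons, h1, h2, o1, o2, ih.2]
    omega

/-- State trace of a Bfun tail from states (1,b). -/
lemma Bfun_states : ∀ j l (b : ZMod 2),
    (∀ t ∈ (encStates (1,b) (Bfun j l)).dropLast, t ≠ ((0:ZMod 2),(0:ZMod 2))) ∧
    (encStates (1,b) (Bfun j l)).getLast? = some (0,0) := by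
  intro j l
  induction j, l using Bfun.induct with
  | case1 =>
    intro b
    constructor <;> simp [Bfun, encStates, nextState]
  | case2 j l ih =>
    intro b
    have hnn : encStates ((1:ZMod 2),(0:ZMod 2)) (Bfun j l) ≠ [] :=
      encStates_ne_nil (Bfun_ne_nil j l)
    have hst : encStates (1,b) (Bfun 0 (j :: l)) =
        (0,1) :: (1,0) :: encStates (1,0) (Bfun j l) := by
      simp [Bfun, encStates_cons, nextState]
    rw [hst]
    obtain ⟨ih1, ih2⟩ := ih 0
    constructor
    · rw [List.dropLast_cons_of_ne_nil (by simp [hnn]),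
        List.dropLast_cons_of_ne_nil hnn]
      intro t ht
      simp only [List.mem_cons] at ht
      rcases ht with ht | ht | ht
      · subst ht; decide
      · subst ht; decide
      · exact ih1 t (by simpa using ht)
    · rw [List.getLast?_cons_cons, getLast?_cons_ne_nil _ hnn]
      exact ih2
  | case3 j l ih =>
    intro b
    have hnn : encStates ((1:ZMod 2),(1:ZMod 2)) (Bfun j l) ≠ [] :=
      encStates_ne_nil (Bfun_ne_nil j l)
    have hst : encStates (1,b) (Bfun (j+1) l) =
        (1,1) :: encStates (1,1) (Bfun j l) := by
      simp [Bfun, encStates_cons, nextState]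
    rw [hst]
    obtain ⟨ih1, ih2⟩ := ih 1
    constructor
    · rw [List.dropLast_cons_of_ne_nil hnn]
      intro t ht
      simp only [List.mem_cons] at ht
      rcases ht with ht | ht
      · subst ht; decide
      · exact ih1 t (by simpa using ht)
    · rw [getLast?_cons_ne_nil _ hnn]
      exact ih2

lemma Ev_spec (p : ℕ × List ℕ) :
    IsErrorEvent (Ev p) ∧ expWeight (Ev p) = 16 + 4 * wgt p := by
  obtain ⟨j, l⟩ := p
  have hnn : encStates ((1:ZMod 2),(0:ZMod 2)) (Bfun j l) ≠ [] :=
    encStates_ne_nil (Bfun_ne_nil j l)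
  have hst : encStates (0,0) (Ev (j,l)) = (1,0) :: encStates (1,0) (Bfun j l) := by
    simp [Ev, encStates_cons, nextState]
  obtain ⟨s1, s2⟩ := Bfun_states j l 0
  refine ⟨⟨by simp [Ev], by simp [Ev], ?_, ?_⟩, ?_⟩
  · rw [hst, List.dropLast_cons_of_ne_nil hnn]
    intro t ht
    simp only [List.mem_cons] at ht
    rcases ht with ht | ht
    · subst ht; decide
    · exact s1 t (by simpa using ht)
  · rw [hst, getLast?_cons_ne_nil _ hnn]
    exact s2
  · have : expWeight (Ev (j,l)) = wOut (outSym 1 (0,0)) + wFrom (1,0) (Bfun j l) := by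
      rw [expWeight_eq]
      simp [Ev, wFrom_cons, nextState]
    rw [this, (Bfun_weight j l).1]
    have : wOut (outSym 1 ((0:ZMod 2),(0:ZMod 2))) = 6 := by decide
    rw [this]
    simp only [wgt]
    omega

lemma zmod2_cases (x : ZMod 2) : x = 0 ∨ x = 1 := by revert x; decide

lemma encStates_fst (a b c : ZMod 2) (us : List (ZMod 2)) :
    encStates (a, b) us = encStates (a, c) us := by
  cases us with
  | nil => rfl
  | cons u t => simp [encStates_cons, nextState]

lemma Bfun_surj : ∀ (n : ℕ) (v : List (ZMod 2)), v.length ≤ n → v ≠ [] →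
    (∀ t ∈ (encStates (1,0) v).dropLast, t ≠ ((0:ZMod 2),(0:ZMod 2))) →
    (encStates (1,0) v).getLast? = some (0,0) →
    ∃ j l, v = Bfun j l := by
  intro n
  induction n with
  | zero => intro v hlen hne _ _; simp at hlen; exact absurd hlen hne
  | succ n ih =>
    intro v hlen hne hdrop hlast
    obtain ⟨x, v', rfl⟩ := List.exists_cons_of_ne_nil hne
    rcases zmod2_cases x with rfl | rfl
    · -- x = 0 : go to state (0,1)
      have hst : encStates ((1:ZMod 2),(0:ZMod 2)) (0 :: v') =
          (0,1) :: encStates (0,1) v' := rfl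
      rw [hst] at hdrop hlast
      cases v' with
      | nil => simp [encStates] at hlast
      | cons y v'' =>
        rcases zmod2_cases y with rfl | rfl
        · -- y = 0 : reach (0,0); must end
          have hst2 : encStates ((0:ZMod 2),(1:ZMod 2)) (0 :: v'') =
              (0,0) :: encStates (0,0) v'' := rfl
          rw [hst2] at hdrop hlast
          cases v'' with
          | nil => exact ⟨0, [], by simp [Bfun]⟩
          | cons z v''' =>
            exfalso
            have hnn : encStates ((0:ZMod 2),(0:ZMod 2)) (z :: v''') ≠ [] :=
              encStates_ne_nil (by simp)
            have : ((0:ZMod 2),(0:ZMod 2)) ∈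
                ((0,1) :: (0,0) :: encStates ((0:ZMod 2),(0:ZMod 2)) (z :: v''')).dropLast := by
              rw [List.dropLast_cons_of_ne_nil (by simp [hnn]),
                List.dropLast_cons_of_ne_nil hnn]
              simp
            exact hdrop _ this rfl
        · -- y = 1 : back to state (1,0)
          have hst2 : encStates ((0:ZMod 2),(1:ZMod 2)) (1 :: v'') =
              (1,0) :: encStates (1,0) v'' := rfl
          rw [hst2] at hdrop hlast
          have hne'' : v'' ≠ [] := by
            rintro rfl
            simp [encStates] at hlast
          have hnn : encStates ((1:ZMod 2),(0:ZMod 2)) v'' ≠ [] := encStates_ne_nil hne''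
          have hd : ∀ t ∈ (encStates ((1:ZMod 2),(0:ZMod 2)) v'').dropLast,
              t ≠ ((0:ZMod 2),(0:ZMod 2)) := by
            intro t ht
            apply hdrop
            rw [List.dropLast_cons_of_ne_nil (by simp [hnn]),
              List.dropLast_cons_of_ne_nil hnn]
            simp [ht]
          have hl : (encStates ((1:ZMod 2),(0:ZMod 2)) v'').getLast? = some (0,0) := by
            rw [List.getLast?_cons_cons, getLast?_cons_ne_nil _ hnn] at hlast
            exact hlast
          obtain ⟨j, l, rfl⟩ := ih v'' (by simp at hlen; omega) hne'' hd hl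
          exact ⟨0, j :: l, by simp [Bfun]⟩
    · -- x = 1 : go to state (1,1)
      have hst : encStates ((1:ZMod 2),(0:ZMod 2)) (1 :: v') =
          (1,1) :: encStates (1,1) v' := rfl
      rw [hst] at hdrop hlast
      have hne' : v' ≠ [] := by
        rintro rfl
        simp [encStates] at hlast
      have hnn : encStates ((1:ZMod 2),(1:ZMod 2)) v' ≠ [] := encStates_ne_nil hne'
      have hd : ∀ t ∈ (encStates ((1:ZMod 2),(0:ZMod 2)) v').dropLast,
          t ≠ ((0:ZMod 2),(0:ZMod 2)) := by
        intro t ht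
        apply hdrop
        rw [List.dropLast_cons_of_ne_nil hnn]
        rw [encStates_fst 1 0 1] at ht
        exact List.mem_cons_of_mem _ ht
      have hl : (encStates ((1:ZMod 2),(0:ZMod 2)) v').getLast? = some (0,0) := by
        rw [getLast?_cons_ne_nil _ hnn] at hlast
        rw [encStates_fst 1 0 1]
        exact hlast
      obtain ⟨j, l, rfl⟩ := ih v' (by simp at hlen; omega) hne' hd hl
      exact ⟨j + 1, l, by simp [Bfun]⟩

lemma err_surj {us : List (ZMod 2)} (h : IsErrorEvent us) : ∃ p, us = Ev p := by
  obtain ⟨hne, hhd, hdrop, hlast⟩ := h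
  obtain ⟨x, v, rfl⟩ := List.exists_cons_of_ne_nil hne
  have hx : x = 1 := by simpa using hhd
  subst hx
  have hst : encStates ((0:ZMod 2),(0:ZMod 2)) (1 :: v) =
      (1,0) :: encStates (1,0) v := rfl
  rw [hst] at hdrop hlast
  have hne' : v ≠ [] := by
    rintro rfl
    simp [encStates] at hlast
  have hnn : encStates ((1:ZMod 2),(0:ZMod 2)) v ≠ [] := encStates_ne_nil hne'
  have hd : ∀ t ∈ (encStates ((1:ZMod 2),(0:ZMod 2)) v).dropLast,
      t ≠ ((0:ZMod 2),(0:ZMod 2)) := by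
    intro t ht
    apply hdrop
    rw [List.dropLast_cons_of_ne_nil hnn]
    simp [ht]
  have hl : (encStates ((1:ZMod 2),(0:ZMod 2)) v).getLast? = some (0,0) := by
    rw [getLast?_cons_ne_nil _ hnn] at hlast
    exact hlast
  obtain ⟨j, l, rfl⟩ := Bfun_surj v.length v le_rfl hne' hd hl
  exact ⟨(j, l), rfl⟩

lemma Bfun_inj : ∀ j l j' l', Bfun j l = Bfun j' l' → j = j' ∧ l = l' := by
  intro j l
  induction j, l using Bfun.induct with
  | case1 =>
    intro j' l' h
    match j', l' with
    | 0, [] => exact ⟨rfl, rfl⟩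
    | 0, a :: t => simp [Bfun] at h
    | j'+1, l' =>
      simp only [Bfun] at h
      exact absurd (List.cons.injEq .. ▸ h).1 (by decide)
  | case2 a t ih =>
    intro j' l' h
    match j', l' with
    | 0, [] => simp [Bfun] at h
    | 0, a' :: t' =>
      simp only [Bfun, List.cons.injEq] at h
      obtain ⟨rfl, rfl⟩ := ih a' t' h.2.2
      exact ⟨rfl, rfl⟩
    | j'+1, l' =>
      simp only [Bfun] at h
      exact absurd (List.cons.injEq .. ▸ h).1 (by decide)
  | case3 j l ih =>
    intro j' l' h
    match j', l' with
    | 0, [] =>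
      simp only [Bfun] at h
      exact absurd (List.cons.injEq .. ▸ h).1 (by decide)
    | 0, a' :: t' =>
      simp only [Bfun] at h
      exact absurd (List.cons.injEq .. ▸ h).1 (by decide)
    | j'+1, l' =>
      simp only [Bfun, List.cons.injEq] at h
      obtain ⟨rfl, rfl⟩ := ih j' l' h.2
      exact ⟨rfl, rfl⟩

lemma Ev_inj : Function.Injective Ev := by
  rintro ⟨j, l⟩ ⟨j', l'⟩ h
  simp only [Ev, List.cons.injEq, true_and] at h
  obtain ⟨rfl, rfl⟩ := Bfun_inj j l j' l' h
  rfl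

lemma count_wgt : ∀ k : ℕ, {p : ℕ × List ℕ | wgt p = k}.Finite ∧
    {p : ℕ × List ℕ | wgt p = k}.ncard = 2 ^ k := by
  intro k
  induction k with
  | zero =>
    have hset : {p : ℕ × List ℕ | wgt p = 0} = {((0 : ℕ), ([] : List ℕ))} := by
      ext ⟨j, l⟩
      simp only [Set.mem_setOf_eq, Set.mem_singleton_iff, wgt, Prod.mk.injEq]
      constructor
      · intro h
        have hj : j = 0 := by omega
        have hl : l.length = 0 := by omega
        exact ⟨hj, List.length_eq_zero_iff.mp hl⟩
      · rintro ⟨rfl, rfl⟩; simp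
    rw [hset]
    exact ⟨Set.finite_singleton _, by simp⟩
  | succ k ih =>
    obtain ⟨ihf, ihc⟩ := ih
    set S : Set (ℕ × List ℕ) := {p | wgt p = k}
    have hset : {p : ℕ × List ℕ | wgt p = k + 1} =
        (fun p : ℕ × List ℕ => (p.1 + 1, p.2)) '' S ∪
        (fun p : ℕ × List ℕ => (0, p.1 :: p.2)) '' S := by
      ext ⟨j, l⟩
      simp only [Set.mem_setOf_eq, Set.mem_union, Set.mem_image, Prod.exists, Prod.mk.injEq, S]
      constructor
      · intro h
        cases j with
        | succ j' => exact Or.inl ⟨j', l, by simp only [wgt] at h ⊢; omega, rfl, rfl⟩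
        | zero =>
          right
          cases l with
          | nil => simp [wgt] at h
          | cons a t =>
            refine ⟨a, t, ?_, rfl, rfl⟩
            simp only [wgt, List.sum_cons, List.length_cons] at h ⊢
            omega
      · rintro (⟨a, t, hw, rfl, rfl⟩ | ⟨a, t, hw, rfl, rfl⟩) <;>
          simp only [wgt, List.sum_cons, List.length_cons] at hw ⊢ <;> omega
    have hinj1 : Function.Injective (fun p : ℕ × List ℕ => (p.1 + 1, p.2)) := by
      rintro ⟨a, b⟩ ⟨c, d⟩ h
      simp only [Prod.mk.injEq] at h
      exact Prod.ext (by omega) h.2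
    have hinj2 : Function.Injective (fun p : ℕ × List ℕ => ((0 : ℕ), p.1 :: p.2)) := by
      rintro ⟨a, b⟩ ⟨c, d⟩ h
      simp only [Prod.mk.injEq, List.cons.injEq] at h
      exact Prod.ext h.2.1 h.2.2
    have hdisj : Disjoint ((fun p : ℕ × List ℕ => (p.1 + 1, p.2)) '' S)
        ((fun p : ℕ × List ℕ => ((0 : ℕ), p.1 :: p.2)) '' S) := by
      rw [Set.disjoint_left]
      rintro x ⟨a, _, rfl⟩ ⟨b, _, hb⟩
      simp only [Prod.mk.injEq] at hb
      omega
    constructor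
    · rw [hset]; exact (ihf.image _).union (ihf.image _)
    · rw [hset, Set.ncard_union_eq hdisj (ihf.image _) (ihf.image _),
        Set.ncard_image_of_injective _ hinj1, Set.ncard_image_of_injective _ hinj2, ihc]
      ring


/-- Every error event of the expanded (7,5) permutation trellis code has
expanded weight of the form `16 + 4k`, and for every `k ≥ 0` there are exactly
`2^k` error events of expanded weight `16 + 4k`: the weight enumerator is
`T(D) = ∑_{k≥0} 2^k D^{16+4k} = D^16 + 2D^20 + 4D^24 + ⋯`. -/
theorem stmt_9 :
    (∀ us : List (ZMod 2), IsErrorEvent us → ∃ k : ℕ, expWeight us = 16 + 4 * k) ∧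
    (∀ k : ℕ,
      {us : List (ZMod 2) | IsErrorEvent us ∧ expWeight us = 16 + 4 * k}.ncard
        = 2 ^ k) := by
  constructor
  · intro us h
    obtain ⟨p, rfl⟩ := err_surj h
    exact ⟨wgt p, (Ev_spec p).2⟩
  · intro k
    have hset : {us : List (ZMod 2) | IsErrorEvent us ∧ expWeight us = 16 + 4 * k} =
        Ev '' {p | wgt p = k} := by
      ext us
      simp only [Set.mem_setOf_eq, Set.mem_image]
      constructor
      · rintro ⟨he, hw⟩
        obtain ⟨p, rfl⟩ := err_surj he
        refine ⟨p, ?_, rfl⟩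
        have := (Ev_spec p).2
        omega
      · rintro ⟨p, hp, rfl⟩
        exact ⟨(Ev_spec p).1, by rw [(Ev_spec p).2, hp]⟩
    rw [hset, Set.ncard_image_of_injective _ Ev_inj]
    exact (count_wgt k).2
end
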